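/- For any g ∈ SL(n, ℂ), the matrix g gᵀ is a complex symmetric matrix of determinant 1; conversely every complex symmetric matrix Z with det Z = 1 can be written Z = g gᵀ for some g ∈ SL(n, ℂ). -/

import Mathlib

open Matrix

lemma symm_bilin {n : ℕ} {Z : Matrix (Fin n) (Fin n) ℂ} (hs : Z.IsSymm) :
    (Matrix.toLinearMap₂' ℂ Z).IsSymm := by
  refine ⟨fun x y => ?_⟩
  rw [RingHom.id_apply, Matrix.toLinearMap₂'_apply', Matrix.toLinearMap₂'_apply',
    Matrix.dotProduct_mulVec, ← Matrix.mulVec_transpose, hs.eq, dotProduct_comm]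

lemma factor_aux {n : ℕ} (Z : Matrix (Fin n) (Fin n) ℂ) (hs : Z.IsSymm) (hd : Z.det = 1) :
    ∃ P : Matrix (Fin n) (Fin n) ℂ, Z = Pᵀ * P := by
  have hassoc : QuadraticMap.associated (R := ℂ) Z.toQuadraticMap'
      = Matrix.toLinearMap₂' ℂ Z :=
    QuadraticMap.associated_left_inverse _ (symm_bilin hs).eq
  have hassoc1 : QuadraticMap.associated (R := ℂ)
        (1 : Matrix (Fin n) (Fin n) ℂ).toQuadraticMap'
      = Matrix.toLinearMap₂' ℂ (1 : Matrix (Fin n) (Fin n) ℂ) :=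
    QuadraticMap.associated_left_inverse _ (symm_bilin Matrix.isSymm_one).eq
  have hsep : (QuadraticMap.associated (R := ℂ) Z.toQuadraticMap').SeparatingLeft := by
    rw [hassoc]
    exact (LinearMap.separatingLeft_toLinearMap₂'_iff_det_ne_zero).2 (by rw [hd]; exact one_ne_zero)
  have hsep1 : (QuadraticMap.associated (R := ℂ)
      (1 : Matrix (Fin n) (Fin n) ℂ).toQuadraticMap').SeparatingLeft := by
    rw [hassoc1]
    exact (LinearMap.separatingLeft_toLinearMap₂'_iff_det_ne_zero).2 (by simp)
  obtain ⟨e⟩ := QuadraticForm.complex_equivalent Z.toQuadraticMap'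
    (1 : Matrix (Fin n) (Fin n) ℂ).toQuadraticMap' hsep hsep1
  have hcomp : Z.toQuadraticMap'
      = (1 : Matrix (Fin n) (Fin n) ℂ).toQuadraticMap'.comp
        (e.toLinearEquiv : (Fin n → ℂ) →ₗ[ℂ] (Fin n → ℂ)) := by
    ext x
    simpa using (e.map_app x).symm
  have hmat := congrArg QuadraticForm.toMatrix' hcomp
  rw [QuadraticForm.toMatrix'_comp] at hmat
  have hZ : Z.toQuadraticMap'.toMatrix' = Z := by
    rw [QuadraticForm.toMatrix', hassoc, LinearMap.toMatrix'_toLinearMap₂']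
  have h1 : (1 : Matrix (Fin n) (Fin n) ℂ).toQuadraticMap'.toMatrix' = 1 := by
    rw [QuadraticForm.toMatrix', hassoc1, LinearMap.toMatrix'_toLinearMap₂']
  rw [hZ, h1, Matrix.mul_one] at hmat
  exact ⟨_, hmat⟩

lemma factor {n : ℕ} (Z : Matrix (Fin n) (Fin n) ℂ) (hs : Z.IsSymm) (hd : Z.det = 1) :
    ∃ P : Matrix (Fin n) (Fin n) ℂ, P.det = 1 ∧ Z = Pᵀ * P := by
  obtain ⟨P, hP⟩ := factor_aux Z hs hd
  have hdet : P.det * P.det = 1 := by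
    have := congrArg Matrix.det hP
    rwa [Matrix.det_mul, Matrix.det_transpose, hd, eq_comm] at this
  have hpm : P.det = 1 ∨ P.det = -1 := by
    rcases mul_self_eq_one_iff.mp hdet with h | h
    · exact Or.inl h
    · exact Or.inr h
  rcases hpm with h | h
  · exact ⟨P, h, hP⟩
  · rcases Nat.eq_zero_or_pos n with rfl | hn
    · exfalso
      rw [Matrix.det_fin_zero] at h
      norm_num at h
    · have i0 : Fin n := ⟨0, hn⟩
      set d : Fin n → ℂ := fun i => if i = i0 then -1 else 1 with hdd
      refine ⟨Matrix.diagonal d * P, ?_, ?_⟩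
      · rw [Matrix.det_mul, Matrix.det_diagonal, h]
        have : ∏ i, d i = -1 := by
          rw [hdd]
          rw [Finset.prod_ite_eq' Finset.univ i0 (fun _ => (-1 : ℂ))]
          simp
        rw [this]; ring
      · rw [Matrix.transpose_mul, Matrix.diagonal_transpose, Matrix.mul_assoc,
          ← Matrix.mul_assoc (Matrix.diagonal d), Matrix.diagonal_mul_diagonal]
        have : (fun i => d i * d i) = fun _ => (1 : ℂ) := by
          funext i; rw [hdd]; by_cases hi : i = i0 <;> simp [hi]
        rw [this, Matrix.diagonal_one, Matrix.one_mul, hP]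

theorem stmt8 (n : ℕ) :
    (∀ g : Matrix.SpecialLinearGroup (Fin n) ℂ,
      ((g : Matrix (Fin n) (Fin n) ℂ) * (g : Matrix (Fin n) (Fin n) ℂ)ᵀ).IsSymm ∧
      ((g : Matrix (Fin n) (Fin n) ℂ) * (g : Matrix (Fin n) (Fin n) ℂ)ᵀ).det = 1) ∧
    ∀ Z : Matrix (Fin n) (Fin n) ℂ, Z.IsSymm → Z.det = 1 →
      ∃ g : Matrix.SpecialLinearGroup (Fin n) ℂ,
        Z = (g : Matrix (Fin n) (Fin n) ℂ) * (g : Matrix (Fin n) (Fin n) ℂ)ᵀ := by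
  constructor
  · intro g
    constructor
    · unfold Matrix.IsSymm
      rw [Matrix.transpose_mul, Matrix.transpose_transpose]
    · rw [Matrix.det_mul, Matrix.det_transpose, g.2, one_mul]
  · intro Z hs hd
    obtain ⟨P, hPdet, hP⟩ := factor Z hs hd
    refine ⟨⟨Pᵀ, by rwa [Matrix.det_transpose]⟩, ?_⟩
    simpa [Matrix.transpose_transpose] using hP
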